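/- arXiv:1811.03434 — 5 statements merged into one kernel-verified Lean document; each statement's English description precedes it below -/
import Mathlib

section
/- Let p, d ∈ L^∞(ℝ) be non-negative, n₀ ∈ L¹(ℝ) non-negative, and T > 0. Then there exists a unique non-negative ρ ∈ L^∞(0,T) satisfying ρ(t) = ∫_ℝ n₀(x) exp(t p(x) − d(x) ∫₀ᵗ ρ(s) ds) dx for a.e. t ∈ (0,T). -/
/-!
Writing `R t = ∫₀ᵗ ρ`, the fixed-point equation says `R' = g(t, R)`, `R 0 = 0`, where
`g(t, y) = ∫ n₀ exp (t p - d y)`. For `0 ≤ t ≤ T` and `y ≥ 0`, `g` is bounded by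
`‖n₀‖₁ e^{T Np}` and Lipschitz in `y` with constant `Nd ‖n₀‖₁ e^{T Np}`, so Picard–Lindelöf
yields `R` and the solution `ρ t = g(t, R t)`. Conversely the primitive of any bounded
non-negative solution is continuous and solves the same integral equation, so it equals `R` by
uniqueness for Lipschitz ODEs, and then the solution equals `g(t, R t)` almost everywhere.
-/

open MeasureTheory Set Filter Topology
open scoped NNReal

section IntegralEquation

variable {E : Type*} [NormedAddCommGroup E] [NormedSpace ℝ E] [CompleteSpace E]

theorem hasDerivWithinAt_Ici_of_eq_integral {φ R : ℝ → E} {a b t : ℝ} {x₀ : E}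
    (hφ : ContinuousOn φ (Icc a b)) (hR : ∀ s ∈ Icc a b, R s = x₀ + ∫ u in a..s, φ u)
    (ht : t ∈ Ico a b) : HasDerivWithinAt R (φ t) (Ici t) t := by
  have hIcc : Icc a b ∈ 𝓝[>] t := Icc_mem_nhdsGT_of_mem ht
  have hint : IntervalIntegrable φ volume a t :=
    (hφ.mono (Icc_subset_Icc_right ht.2.le)).intervalIntegrable_of_Icc ht.1
  have hderiv := intervalIntegral.integral_hasDerivWithinAt_right (s := Ici t) hint
    ((hφ.stronglyMeasurableAtFilter_nhdsWithin measurableSet_Icc t).filter_mono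
      (nhdsWithin_le_of_mem hIcc))
    ((hφ t (Ico_subset_Icc_self ht)).mono_of_mem_nhdsWithin hIcc)
  refine (hderiv.const_add x₀).congr_of_eventuallyEq ?_ (hR t (Ico_subset_Icc_self ht))
  filter_upwards [Icc_mem_nhdsGE_of_mem ht] with s hs using hR s hs

theorem eqOn_of_eq_integral {v : ℝ → E → E} {a b : ℝ} {K : ℝ≥0} {x₀ : E}
    {R₁ R₂ : ℝ → E} (hv : ContinuousOn (Function.uncurry v) (Icc a b ×ˢ univ))
    (hlip : ∀ t ∈ Ico a b, LipschitzWith K (v t))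
    (hR₁ : ContinuousOn R₁ (Icc a b)) (hR₂ : ContinuousOn R₂ (Icc a b))
    (h₁ : ∀ t ∈ Icc a b, R₁ t = x₀ + ∫ s in a..t, v s (R₁ s))
    (h₂ : ∀ t ∈ Icc a b, R₂ t = x₀ + ∫ s in a..t, v s (R₂ s)) :
    EqOn R₁ R₂ (Icc a b) := by
  rcases lt_or_ge b a with hba | hab
  · simp [Icc_eq_empty_of_lt hba]
  have hderiv : ∀ R : ℝ → E, ContinuousOn R (Icc a b) →
      (∀ t ∈ Icc a b, R t = x₀ + ∫ s in a..t, v s (R s)) →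
      ∀ t ∈ Ico a b, HasDerivWithinAt R (v t (R t)) (Ici t) t := fun R hR h _ =>
    hasDerivWithinAt_Ici_of_eq_integral (ODE.continuousOn_comp hv hR (mapsTo_univ _ _)) h
  have hstart : R₁ a = R₂ a := by
    rw [h₁ a (left_mem_Icc.2 hab), h₂ a (left_mem_Icc.2 hab)]; simp
  exact ODE_solution_unique_of_mem_Icc_right (s := fun _ => univ)
    (fun t ht => (hlip t ht).lipschitzOnWith) hR₁ (hderiv R₁ hR₁ h₁) (fun _ _ => trivial)
    hR₂ (hderiv R₂ hR₂ h₂) (fun _ _ => trivial) hstart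

theorem exists_continuous_eq_integral {v : ℝ → E → E} {a b : ℝ} (hab : a ≤ b) {K : ℝ≥0}
    {L : ℝ} (x₀ : E) (hv : ContinuousOn (Function.uncurry v) (Icc a b ×ˢ univ))
    (hlip : ∀ t ∈ Icc a b, LipschitzWith K (v t)) (hle : ∀ t ∈ Icc a b, ∀ x, ‖v t x‖ ≤ L) :
    ∃ R : ℝ → E, Continuous R ∧ ∀ t ∈ Icc a b, R t = x₀ + ∫ s in a..t, v s (R s) := by
  have hL : 0 ≤ L := (norm_nonneg _).trans (hle a (left_mem_Icc.2 hab) x₀)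
  have hPL : IsPicardLindelof v (tmin := a) (tmax := b) ⟨a, left_mem_Icc.2 hab⟩ x₀
      ⟨L * (b - a), mul_nonneg hL (sub_nonneg.2 hab)⟩ 0 ⟨L, hL⟩ K :=
    { lipschitzOnWith := fun t ht => (hlip t ht).lipschitzOnWith
      continuousOn := fun x _ =>
        hv.comp (continuous_id.prodMk continuous_const).continuousOn fun t ht => ⟨ht, trivial⟩
      norm_le := fun t ht x _ => hle t ht x
      mul_max_le := by simp [max_eq_left (sub_nonneg.2 hab)]; rfl }
  obtain ⟨α, hα₀, hα⟩ := hPL.exists_eq_forall_mem_Icc_hasDerivWithinAt₀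
  set R : ℝ → E := IccExtend hab ((Icc a b).domRestrict α)
  have hRα : EqOn R α (Icc a b) := fun t ht => IccExtend_of_mem hab _ ht
  have hR : Continuous R := continuous_IccExtend_iff.2 <|
    continuousOn_iff_continuous_domRestrict.1 fun t ht => (hα t ht).continuousWithinAt
  refine ⟨R, hR, fun t ht => ?_⟩
  have hderiv : ∀ s ∈ Icc a b, HasDerivWithinAt R (v s (R s)) (Icc a b) s := fun s hs => by
    rw [hRα hs]; exact (hα s hs).congr hRα (hRα hs)
  have hftc := intervalIntegral.integral_eq_sub_of_hasDeriv_right_of_le ht.1 hR.continuousOn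
    (fun s hs => ((hderiv s ⟨hs.1.le, hs.2.le.trans ht.2⟩).hasDerivAt
      (Icc_mem_nhds hs.1 (hs.2.trans_le ht.2))).hasDerivWithinAt)
    (ContinuousOn.intervalIntegrable_of_Icc ht.1 <|
      (ODE.continuousOn_comp hv hR.continuousOn (mapsTo_univ _ _)).mono
        (Icc_subset_Icc_right ht.2))
  rw [hftc, hRα (left_mem_Icc.2 hab), hα₀]
  abel

end IntegralEquation

theorem intervalIntegral.integral_congr_of_ae_eq_Ioo {E : Type*} [NormedAddCommGroup E]
    [NormedSpace ℝ E] {f g : ℝ → E} {a b t : ℝ} (h : f =ᵐ[volume.restrict (Ioo a b)] g)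
    (ht : t ∈ Icc a b) : ∫ s in a..t, f s = ∫ s in a..t, g s := by
  refine intervalIntegral.integral_congr_ae_restrict ?_
  rw [uIoc_of_le ht.1, ← Measure.restrict_congr_set Ioo_ae_eq_Ioc]
  exact ae_restrict_of_ae_restrict_of_subset (Ioo_subset_Ioo_right ht.2) h

theorem Real.abs_exp_sub_exp_le_of_le {u v c : ℝ} (hu : u ≤ c) (hv : v ≤ c) :
    |Real.exp u - Real.exp v| ≤ Real.exp c * |u - v| := by
  wlog h : v ≤ u generalizing u v
  · rw [abs_sub_comm, abs_sub_comm u]; exact this hv hu (le_of_not_ge h)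
  rw [abs_of_nonneg (sub_nonneg.2 (Real.exp_le_exp.2 h)), abs_of_nonneg (sub_nonneg.2 h)]
  have hexp : Real.exp (v - u) ≤ 1 := Real.exp_le_one_iff.2 (by linarith)
  calc Real.exp u - Real.exp v = Real.exp u * (1 - Real.exp (v - u)) := by
        rw [mul_sub, ← Real.exp_add]; ring_nf
    _ ≤ Real.exp c * (u - v) :=
        mul_le_mul (Real.exp_le_exp.2 hu) (by linarith [Real.add_one_le_exp (v - u)])
          (by linarith) (Real.exp_pos c).le

theorem mul_sub_mul_max_le {t S P D Np : ℝ} (ht : |t| ≤ S) (hP : 0 ≤ P) (hPN : P ≤ Np)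
    (hD : 0 ≤ D) (y : ℝ) : t * P - D * max y 0 ≤ S * Np := by
  have := mul_nonneg hD (le_max_right y 0)
  nlinarith [le_abs_self t, abs_nonneg t]

/-- The total population at time `t` when the accumulated competition `∫₀ᵗ ρ` equals `y`.
Truncating `y` at `0` makes it bounded and globally Lipschitz in `y`, and changes nothing on the
relevant range `y ≥ 0`. -/
noncomputable def populationSize {α : Type*} [MeasurableSpace α] (μ : Measure α)
    (p d n₀ : α → ℝ) (t y : ℝ) : ℝ :=
  ∫ x, n₀ x * Real.exp (t * p x - d x * max y 0) ∂μ

section PopulationSize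

variable {α : Type*} [MeasurableSpace α] {μ : Measure α} {p d n₀ : α → ℝ} {Np Nd : ℝ}

theorem integrable_populationSize_integrand (hpm : Measurable p) (hdm : Measurable d)
    (hpnn : ∀ x, 0 ≤ p x) (hdnn : ∀ x, 0 ≤ d x) (hn₀nn : ∀ x, 0 ≤ n₀ x)
    (hn₀ : Integrable n₀ μ) (hNp : ∀ x, p x ≤ Np) (t y : ℝ) :
    Integrable (fun x => n₀ x * Real.exp (t * p x - d x * max y 0)) μ := by
  refine (hn₀.mul_const (Real.exp (|t| * Np))).mono'
    (hn₀.aestronglyMeasurable.mul (by fun_prop)) (ae_of_all _ fun x => ?_)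
  rw [Real.norm_of_nonneg (mul_nonneg (hn₀nn x) (Real.exp_pos _).le)]
  exact mul_le_mul_of_nonneg_left
    (Real.exp_le_exp.2 (mul_sub_mul_max_le le_rfl (hpnn x) (hNp x) (hdnn x) y)) (hn₀nn x)

theorem populationSize_nonneg (hn₀nn : ∀ x, 0 ≤ n₀ x) (t y : ℝ) :
    0 ≤ populationSize μ p d n₀ t y :=
  integral_nonneg fun x => mul_nonneg (hn₀nn x) (Real.exp_pos _).le

theorem populationSize_le (hpm : Measurable p) (hdm : Measurable d) (hpnn : ∀ x, 0 ≤ p x)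
    (hdnn : ∀ x, 0 ≤ d x) (hn₀nn : ∀ x, 0 ≤ n₀ x) (hn₀ : Integrable n₀ μ)
    (hNp : ∀ x, p x ≤ Np) {t S : ℝ} (ht : |t| ≤ S) (y : ℝ) :
    populationSize μ p d n₀ t y ≤ (∫ x, n₀ x ∂μ) * Real.exp (S * Np) := by
  rw [← integral_mul_const]
  exact integral_mono (integrable_populationSize_integrand hpm hdm hpnn hdnn hn₀nn hn₀ hNp t y)
    (hn₀.mul_const _) fun x => mul_le_mul_of_nonneg_left
      (Real.exp_le_exp.2 (mul_sub_mul_max_le ht (hpnn x) (hNp x) (hdnn x) y)) (hn₀nn x)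

theorem lipschitzWith_populationSize (hpm : Measurable p) (hdm : Measurable d)
    (hpnn : ∀ x, 0 ≤ p x) (hdnn : ∀ x, 0 ≤ d x) (hn₀nn : ∀ x, 0 ≤ n₀ x)
    (hn₀ : Integrable n₀ μ) (hNp : ∀ x, p x ≤ Np) (hNd : ∀ x, d x ≤ Nd) {t S : ℝ}
    (ht : |t| ≤ S) :
    LipschitzWith (Real.toNNReal (Nd * (∫ x, n₀ x ∂μ) * Real.exp (S * Np)))
      (populationSize μ p d n₀ t) := by
  refine LipschitzWith.of_dist_le' fun y₁ y₂ => ?_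
  have hint := integrable_populationSize_integrand hpm hdm hpnn hdnn hn₀nn hn₀ hNp t
  have hpoint : ∀ x, ‖n₀ x * Real.exp (t * p x - d x * max y₁ 0)
      - n₀ x * Real.exp (t * p x - d x * max y₂ 0)‖
      ≤ n₀ x * (Real.exp (S * Np) * Nd * dist y₁ y₂) := fun x => by
    have hmax : |d x * max y₁ 0 - d x * max y₂ 0| ≤ Nd * dist y₁ y₂ := by
      rw [← mul_sub, abs_mul, abs_of_nonneg (hdnn x), Real.dist_eq]
      exact mul_le_mul (hNd x) (abs_max_sub_max_le_abs _ _ _) (abs_nonneg _)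
        ((hdnn x).trans (hNd x))
    have hexp := Real.abs_exp_sub_exp_le_of_le
      (mul_sub_mul_max_le ht (hpnn x) (hNp x) (hdnn x) y₁)
      (mul_sub_mul_max_le ht (hpnn x) (hNp x) (hdnn x) y₂)
    rw [Real.norm_eq_abs, ← mul_sub, abs_mul, abs_of_nonneg (hn₀nn x), mul_assoc]
    refine mul_le_mul_of_nonneg_left (hexp.trans ?_) (hn₀nn x)
    rw [show t * p x - d x * max y₁ 0 - (t * p x - d x * max y₂ 0)
      = -(d x * max y₁ 0 - d x * max y₂ 0) by ring, abs_neg]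
    exact mul_le_mul_of_nonneg_left hmax (Real.exp_pos _).le
  calc dist (populationSize μ p d n₀ t y₁) (populationSize μ p d n₀ t y₂)
      = ‖∫ x, (n₀ x * Real.exp (t * p x - d x * max y₁ 0)
          - n₀ x * Real.exp (t * p x - d x * max y₂ 0)) ∂μ‖ := by
        rw [dist_eq_norm, populationSize, populationSize, integral_sub (hint y₁) (hint y₂)]
    _ ≤ ∫ x, n₀ x * (Real.exp (S * Np) * Nd * dist y₁ y₂) ∂μ :=
        norm_integral_le_of_norm_le (hn₀.mul_const _) (ae_of_all _ hpoint)
    _ = Nd * (∫ x, n₀ x ∂μ) * Real.exp (S * Np) * dist y₁ y₂ := by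
        rw [integral_mul_const]; ring

theorem continuous_populationSize (hpm : Measurable p) (hdm : Measurable d)
    (hpnn : ∀ x, 0 ≤ p x) (hdnn : ∀ x, 0 ≤ d x) (hn₀nn : ∀ x, 0 ≤ n₀ x)
    (hn₀ : Integrable n₀ μ) (hNp : ∀ x, p x ≤ Np) :
    Continuous (Function.uncurry (populationSize μ p d n₀)) := by
  refine continuous_iff_continuousAt.2 fun q₀ => ?_
  change ContinuousAt
    (fun q : ℝ × ℝ => ∫ x, n₀ x * Real.exp (q.1 * p x - d x * max q.2 0) ∂μ) q₀
  refine continuousAt_of_dominated (bound := fun x => n₀ x * Real.exp ((|q₀.1| + 1) * Np))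
    (.of_forall fun q => (integrable_populationSize_integrand hpm hdm hpnn hdnn hn₀nn hn₀ hNp
      q.1 q.2).aestronglyMeasurable) ?_ (hn₀.mul_const _) (ae_of_all _ fun x => by fun_prop)
  have hnear : ∀ᶠ q : ℝ × ℝ in 𝓝 q₀, |q.1| ≤ |q₀.1| + 1 :=
    (continuous_fst.abs.tendsto q₀).eventually (eventually_le_nhds (lt_add_one _))
  filter_upwards [hnear] with q hq
  refine ae_of_all _ fun x => ?_
  rw [Real.norm_of_nonneg (mul_nonneg (hn₀nn x) (Real.exp_pos _).le)]
  exact mul_le_mul_of_nonneg_left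
    (Real.exp_le_exp.2 (mul_sub_mul_max_le hq (hpnn x) (hNp x) (hdnn x) q.2)) (hn₀nn x)

theorem populationSize_of_nonneg {t y : ℝ} (hy : 0 ≤ y) :
    populationSize μ p d n₀ t y = ∫ x, n₀ x * Real.exp (t * p x - d x * y) ∂μ := by
  rw [populationSize, max_eq_left hy]

end PopulationSize

structure IsPopulationSolution {α : Type*} [MeasurableSpace α] (μ : Measure α)
    (p d n₀ : α → ℝ) (T : ℝ) (ρ : ℝ → ℝ) : Prop where
  measurable : Measurable ρ
  nonneg : ∀ t, 0 ≤ ρ t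
  bddAbove : ∃ C, ∀ t ∈ Ioo (0:ℝ) T, ρ t ≤ C
  ae_eq : ∀ᵐ t ∂(volume.restrict (Ioo (0:ℝ) T)),
    ρ t = ∫ x, n₀ x * Real.exp (t * p x - d x * ∫ s in (0:ℝ)..t, ρ s) ∂μ

namespace IsPopulationSolution

variable {α : Type*} [MeasurableSpace α] {μ : Measure α} {p d n₀ : α → ℝ} {T : ℝ}
  {ρ : ℝ → ℝ}

theorem intervalIntegrable (hρ : IsPopulationSolution μ p d n₀ T ρ) (hT : 0 ≤ T) :
    IntervalIntegrable ρ volume 0 T := by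
  obtain ⟨C, hC⟩ := hρ.bddAbove
  rw [intervalIntegrable_iff_integrableOn_Ioo_of_le hT]
  refine Measure.integrableOn_of_bounded measure_Ioo_lt_top.ne
    hρ.measurable.aestronglyMeasurable (M := C) ?_
  filter_upwards [ae_restrict_mem measurableSet_Ioo] with t ht
  rw [Real.norm_of_nonneg (hρ.nonneg t)]
  exact hC t ht

theorem continuousOn_primitive (hρ : IsPopulationSolution μ p d n₀ T ρ) (hT : 0 ≤ T) :
    ContinuousOn (fun t => ∫ s in (0:ℝ)..t, ρ s) (Icc 0 T) :=
  (intervalIntegral.continuousOn_primitive_interval' (hρ.intervalIntegrable hT)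
    left_mem_uIcc).mono Icc_subset_uIcc

theorem ae_eq_populationSize (hρ : IsPopulationSolution μ p d n₀ T ρ) :
    ρ =ᵐ[volume.restrict (Ioo 0 T)]
      fun t => populationSize μ p d n₀ t (∫ s in (0:ℝ)..t, ρ s) := by
  filter_upwards [hρ.ae_eq, ae_restrict_mem measurableSet_Ioo] with t h ht
  rw [h, populationSize_of_nonneg
    (intervalIntegral.integral_nonneg ht.1.le fun s _ => hρ.nonneg s)]

theorem primitive_eq_integral (hρ : IsPopulationSolution μ p d n₀ T ρ) {t : ℝ}
    (ht : t ∈ Icc 0 T) : ∫ s in (0:ℝ)..t, ρ s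
      = 0 + ∫ s in (0:ℝ)..t, populationSize μ p d n₀ s (∫ u in (0:ℝ)..s, ρ u) := by
  rw [zero_add]
  exact intervalIntegral.integral_congr_of_ae_eq_Ioo hρ.ae_eq_populationSize ht

variable {Np Nd : ℝ}

theorem unique {σ : ℝ → ℝ} (hT : 0 ≤ T) (hpm : Measurable p) (hdm : Measurable d)
    (hpnn : ∀ x, 0 ≤ p x) (hdnn : ∀ x, 0 ≤ d x) (hn₀nn : ∀ x, 0 ≤ n₀ x)
    (hn₀ : Integrable n₀ μ) (hNp : ∀ x, p x ≤ Np) (hNd : ∀ x, d x ≤ Nd)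
    (hρ : IsPopulationSolution μ p d n₀ T ρ) (hσ : IsPopulationSolution μ p d n₀ T σ) :
    ρ =ᵐ[volume.restrict (Ioo 0 T)] σ := by
  have hprim : EqOn (fun t => ∫ s in (0:ℝ)..t, ρ s) (fun t => ∫ s in (0:ℝ)..t, σ s)
      (Icc 0 T) :=
    eqOn_of_eq_integral
      (continuous_populationSize hpm hdm hpnn hdnn hn₀nn hn₀ hNp).continuousOn
      (fun t ht => lipschitzWith_populationSize hpm hdm hpnn hdnn hn₀nn hn₀ hNp hNd
        ((abs_of_nonneg ht.1).trans_le ht.2.le))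
      (hρ.continuousOn_primitive hT) (hσ.continuousOn_primitive hT)
      (fun _ => hρ.primitive_eq_integral) (fun _ => hσ.primitive_eq_integral)
  filter_upwards [hρ.ae_eq_populationSize, hσ.ae_eq_populationSize,
    ae_restrict_mem measurableSet_Ioo] with t hρt hσt ht
  rw [hρt, hσt]
  exact congrArg (populationSize μ p d n₀ t) (hprim (Ioo_subset_Icc_self ht))

end IsPopulationSolution

theorem exists_isPopulationSolution {α : Type*} [MeasurableSpace α] {μ : Measure α}
    {p d n₀ : α → ℝ} {Np Nd T : ℝ} (hT : 0 ≤ T) (hpm : Measurable p) (hdm : Measurable d)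
    (hpnn : ∀ x, 0 ≤ p x) (hdnn : ∀ x, 0 ≤ d x) (hn₀nn : ∀ x, 0 ≤ n₀ x)
    (hn₀ : Integrable n₀ μ) (hNp : ∀ x, p x ≤ Np) (hNd : ∀ x, d x ≤ Nd) :
    ∃ ρ, IsPopulationSolution μ p d n₀ T ρ := by
  have hg := continuous_populationSize hpm hdm hpnn hdnn hn₀nn hn₀ hNp
  have hle : ∀ t ∈ Icc 0 T, ∀ y,
      populationSize μ p d n₀ t y ≤ (∫ x, n₀ x ∂μ) * Real.exp (T * Np) := fun t ht =>
    populationSize_le hpm hdm hpnn hdnn hn₀nn hn₀ hNp ((abs_of_nonneg ht.1).trans_le ht.2)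
  obtain ⟨R, hRc, hR⟩ := exists_continuous_eq_integral hT (0 : ℝ) hg.continuousOn
    (fun t ht => lipschitzWith_populationSize hpm hdm hpnn hdnn hn₀nn hn₀ hNp hNd
      ((abs_of_nonneg ht.1).trans_le ht.2))
    (fun t ht y => by
      rw [Real.norm_of_nonneg (populationSize_nonneg hn₀nn t y)]; exact hle t ht y)
  refine ⟨fun t => populationSize μ p d n₀ t (R t),
    (hg.comp (continuous_id.prodMk hRc)).measurable,
    fun t => populationSize_nonneg hn₀nn t (R t),
    ⟨_, fun t ht => hle t (Ioo_subset_Icc_self ht) _⟩, ?_⟩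
  filter_upwards [ae_restrict_mem measurableSet_Ioo] with t ht
  have hRt : R t = ∫ s in (0:ℝ)..t, populationSize μ p d n₀ s (R s) := by
    rw [hR t (Ioo_subset_Icc_self ht), zero_add]
  rw [← hRt, populationSize_of_nonneg (hRt ▸ intervalIntegral.integral_nonneg ht.1.le
    fun s _ => populationSize_nonneg hn₀nn s (R s))]

/-- Existence and uniqueness (a.e. on `(0,T)`) of a non-negative bounded solution of the
fixed-point equation for the total population size. -/
theorem stmt_2 (T : ℝ) (hT : 0 < T) (p d n₀ : ℝ → ℝ)
    (hpm : Measurable p) (hdm : Measurable d)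
    (hpnn : ∀ x, 0 ≤ p x) (hdnn : ∀ x, 0 ≤ d x) (hn₀nn : ∀ x, 0 ≤ n₀ x)
    (hn₀L1 : Integrable n₀) (Np Nd : ℝ) (hNp : ∀ x, p x ≤ Np) (hNd : ∀ x, d x ≤ Nd) :
    ∃ ρ : ℝ → ℝ, Measurable ρ ∧ (∀ t, 0 ≤ ρ t) ∧ (∃ C, ∀ t ∈ Ioo (0:ℝ) T, ρ t ≤ C) ∧
      (∀ᵐ t ∂(volume.restrict (Ioo (0:ℝ) T)),
        ρ t = ∫ x, n₀ x * Real.exp (t * p x - d x * ∫ s in (0:ℝ)..t, ρ s)) ∧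
      (∀ ρ' : ℝ → ℝ, Measurable ρ' → (∀ t, 0 ≤ ρ' t) →
        (∃ C, ∀ t ∈ Ioo (0:ℝ) T, ρ' t ≤ C) →
        (∀ᵐ t ∂(volume.restrict (Ioo (0:ℝ) T)),
          ρ' t = ∫ x, n₀ x * Real.exp (t * p x - d x * ∫ s in (0:ℝ)..t, ρ' s)) →
        (∀ᵐ t ∂(volume.restrict (Ioo (0:ℝ) T)), ρ' t = ρ t)) := by
  obtain ⟨ρ, hρ⟩ := exists_isPopulationSolution hT.le hpm hdm hpnn hdnn hn₀nn hn₀L1 hNp hNd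
  refine ⟨ρ, hρ.measurable, hρ.nonneg, hρ.bddAbove, hρ.ae_eq,
    fun ρ' hm hnn hbdd heq => ?_⟩
  exact IsPopulationSolution.unique hT.le hpm hdm hpnn hdnn hn₀nn hn₀L1 hNp hNd
    ⟨hm, hnn, hbdd, heq⟩ hρ
end

section
/- Let n₀ ∈ L¹(ℝ) and d ∈ L^∞(ℝ) be non-negative, even functions (n₀(x) = n₀(−x), d(x) = d(−x)), and let p₁ ∈ L^∞(ℝ) be non-negative. Define p₂(x) = p₁(−x). If n₁ is the solution to ∂_t n = (p₁ − d ρ₁) n with n(0,·) = n₀ and ρ₁(t) = ∫ n₁(t,x) dx, then n₂(t,x) := n₁(t,−x) solves ∂_t n = (p₂ − d ρ₂) n with n(0,·) = n₀, and ρ₂(t) = ρ₁(t) for all t ∈ [0,T]. -/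
open MeasureTheory Set

/-- Symmetry counterexample: if `n₀` and `d` are even and `n₁` solves the model with rate `p₁`,
then `n₂(t,x) := n₁(t,-x)` solves the model with rate `p₂(x) = p₁(-x)`, same initial datum,
and the total populations coincide. -/
theorem stmt_5 (T : ℝ) (hT : 0 < T) (n₀ d p₁ : ℝ → ℝ)
    (hn₀L1 : Integrable n₀) (hn₀nn : ∀ x, 0 ≤ n₀ x) (hn₀even : ∀ x, n₀ x = n₀ (-x))
    (hdnn : ∀ x, 0 ≤ d x) (hdb : ∃ C, ∀ x, d x ≤ C) (hdeven : ∀ x, d x = d (-x))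
    (hp₁nn : ∀ x, 0 ≤ p₁ x) (hp₁b : ∃ C, ∀ x, p₁ x ≤ C)
    (n₁ : ℝ → ℝ → ℝ) (ρ₁ : ℝ → ℝ) (hρ₁ : ∀ t, ρ₁ t = ∫ x, n₁ t x)
    (hsol : ∀ t x, HasDerivAt (fun τ => n₁ τ x) ((p₁ x - d x * ρ₁ t) * n₁ t x) t)
    (hinit : ∀ x, n₁ 0 x = n₀ x) :
    (∀ x, n₁ 0 (-x) = n₀ x) ∧
    (∀ t x, HasDerivAt (fun τ => n₁ τ (-x))
      ((p₁ (-x) - d x * (∫ y, n₁ t (-y))) * n₁ t (-x)) t) ∧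
    (∀ t ∈ Icc (0:ℝ) T, (∫ y, n₁ t (-y)) = ρ₁ t) := by
  have hint : ∀ t, (∫ y, n₁ t (-y)) = ρ₁ t := by
    intro t
    rw [hρ₁ t]; exact (MeasureTheory.integral_neg_eq_self (fun y => n₁ t y) volume)
  refine ⟨fun x => by rw [hinit, ← hn₀even], fun t x => ?_, fun t _ => hint t⟩
  rw [hint t, hdeven x]
  exact hsol t (-x)
end

section
/- Let S ⊂ ℝ be a compact interval, n₀ ∈ C⁰(ℝ) non-negative with supp(n₀) = S and n₀ > 0 in the interior of S, and let d > 0 be constant. Let p₁, p₂ be continuously differentiable, strictly monotone functions on S with p₁′ p₂′ > 0. If the corresponding total population sizes satisfy ρ₁(t) = ρ₂(t) for all t ∈ [0,T], then p₁(x) = p₂(x) for all x ∈ S. -/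
/-!
Since `ρᵢ(t) exp (d ∫₀ᵗ ρᵢ) = ∫_S n₀ exp (t pᵢ)`, equal population sizes on `[0, T]` make the
moment generating functions of the push-forwards of `μ = n₀ dx` on `S` under `p₁` and `p₂` agree
on `(0, T)`. Both are entire, hence equal, so the push-forwards coincide. The sign condition forces
`p₁` and `p₂` to be monotone in the same direction, and a strictly increasing `p` is recovered from
its push-forward: `μ {p < p x₀} = μ [a, x₀)`, and `μ` charges every subinterval of `S`.
-/

open MeasureTheory Set Filter Topology ProbabilityTheory

namespace MeasureTheory.Measure

variable {Ω Ω' : Type*} {mΩ : MeasurableSpace Ω} {mΩ' : MeasurableSpace Ω'}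
  {μ : Measure Ω} {μ' : Measure Ω'} {X : Ω → ℝ} {Y : Ω' → ℝ}

theorem map_eq_of_mgf_eventuallyEq [IsFiniteMeasure μ] [IsFiniteMeasure μ']
    (hX : AEMeasurable X μ) (hY : AEMeasurable Y μ')
    (hXi : ∀ t, Integrable (fun ω ↦ Real.exp (t * X ω)) μ)
    (hYi : ∀ t, Integrable (fun ω ↦ Real.exp (t * Y ω)) μ')
    {t₀ : ℝ} (h : mgf X μ =ᶠ[𝓝 t₀] mgf Y μ') :
    μ.map X = μ'.map Y := by
  have hXs : integrableExpSet X μ = univ := eq_univ_of_forall hXi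
  have hYs : integrableExpSet Y μ' = univ := eq_univ_of_forall hYi
  have hmgf : mgf X μ = mgf Y μ' := by
    refine AnalyticOnNhd.eq_of_eventuallyEq (𝕜 := ℝ) ?_ ?_ h
    · simpa [hXs] using analyticOnNhd_mgf (X := X) (μ := μ)
    · simpa [hYs] using analyticOnNhd_mgf (X := Y) (μ := μ')
  have hzero : μ = 0 ↔ μ' = 0 := by
    have h0 := congrFun hmgf 0
    rw [mgf_zero', mgf_zero'] at h0
    rw [← measure_univ_eq_zero, ← measure_univ_eq_zero, ← measureReal_eq_zero_iff,
      ← measureReal_eq_zero_iff, h0]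
  refine ext_of_complexMGF_eq hX hY (funext fun z ↦ eqOn_complexMGF_of_mgf' hmgf hzero ?_)
  simp [hXs]

end MeasureTheory.Measure

section WithDensityRestrict

variable {α : Type*} [MeasurableSpace α] {ν : Measure α} {s : Set α} {f : α → ℝ}

theorem ae_mem_withDensity_restrict (hs : MeasurableSet s) (g : α → ENNReal) :
    ∀ᵐ x ∂(ν.restrict s).withDensity g, x ∈ s :=
  withDensity_absolutelyContinuous _ _ (ae_restrict_mem hs)

theorem integral_withDensity_restrict_ofReal (hs : MeasurableSet s) (hf : Measurable f)
    (hf₀ : ∀ x ∈ s, 0 ≤ f x) (g : α → ℝ) :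
    ∫ x, g x ∂(ν.restrict s).withDensity (fun x ↦ ENNReal.ofReal (f x)) =
      ∫ x in s, f x * g x ∂ν := by
  rw [integral_withDensity_eq_integral_toReal_smul hf.ennreal_ofReal
    (ae_of_all _ fun _ ↦ ENNReal.ofReal_lt_top)]
  refine setIntegral_congr_fun hs fun x hx ↦ ?_
  rw [ENNReal.toReal_ofReal (hf₀ x hx), smul_eq_mul]

theorem withDensity_restrict_ofReal_ne_zero (hf : Measurable f) {t : Set α} (ht : MeasurableSet t)
    (hts : t ⊆ s) (hft : ∀ x ∈ t, 0 < f x) (hνt : ν t ≠ 0) :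
    (ν.restrict s).withDensity (fun x ↦ ENNReal.ofReal (f x)) t ≠ 0 := by
  rw [withDensity_apply _ ht, Measure.restrict_restrict ht, inter_eq_left.2 hts]
  refine ((setLIntegral_pos_iff hf.ennreal_ofReal).2 ?_).ne'
  have hsupp : (Function.support fun x ↦ ENNReal.ofReal (f x)) ∩ t = t :=
    inter_eq_right.2 fun x hx ↦ (ENNReal.ofReal_pos.2 (hft x hx)).ne'
  rw [hsupp]
  exact pos_iff_ne_zero.2 hνt

end WithDensityRestrict

section ConcentratedOn

variable {α E : Type*} [MeasurableSpace α] [TopologicalSpace α] [OpensMeasurableSpace α]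
  {μ : Measure α} {s : Set α}

theorem ContinuousOn.aemeasurable_of_ae_mem {β : Type*} [TopologicalSpace β] [MeasurableSpace β]
    [BorelSpace β] {f : α → β} (hf : ContinuousOn f s) (hs : MeasurableSet s)
    (hμ : ∀ᵐ x ∂μ, x ∈ s) : AEMeasurable f μ :=
  Measure.restrict_eq_self_of_ae_mem hμ ▸ hf.aemeasurable hs

theorem ContinuousOn.integrable_of_ae_mem [NormedAddCommGroup E] [T2Space α]
    [IsFiniteMeasureOnCompacts μ] {f : α → E} (hf : ContinuousOn f s) (hs : IsCompact s)
    (hμ : ∀ᵐ x ∂μ, x ∈ s) : Integrable f μ :=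
  Measure.restrict_eq_self_of_ae_mem hμ ▸ hf.integrableOn_compact hs

end ConcentratedOn

theorem HasDerivWithinAt.mul_nonpos_of_monotoneOn_of_antitoneOn {f g : ℝ → ℝ} {f' g' x : ℝ}
    {s : Set ℝ} (hs : UniqueDiffWithinAt ℝ s x) (hf : HasDerivWithinAt f f' s x)
    (hg : HasDerivWithinAt g g' s x) (hfm : MonotoneOn f s) (hga : AntitoneOn g s) :
    f' * g' ≤ 0 :=
  mul_nonpos_of_nonneg_of_nonpos (hf.derivWithin hs ▸ hfm.derivWithin_nonneg)
    (hg.derivWithin hs ▸ hga.derivWithin_nonpos)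

section PushforwardDeterminesMonotone

variable {μ : Measure ℝ} [IsFiniteMeasure μ] {a b : ℝ} {p₁ p₂ : ℝ → ℝ}

theorem map_ne_map_of_strictMonoOn_of_lt (hμ : ∀ᵐ x ∂μ, x ∈ Icc a b)
    (hpos : ∀ u v, a ≤ u → u < v → v ≤ b → μ (Ioo u v) ≠ 0)
    (h₁ : ContinuousOn p₁ (Icc a b)) (hm₁ : StrictMonoOn p₁ (Icc a b))
    (hm₂ : StrictMonoOn p₂ (Icc a b)) (hX₁ : AEMeasurable p₁ μ) (hX₂ : AEMeasurable p₂ μ)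
    {x₀ : ℝ} (hx₀ : x₀ ∈ Ioo a b) (hlt : p₁ x₀ < p₂ x₀) : μ.map p₁ ≠ μ.map p₂ := by
  intro hmap
  have hx₀' : x₀ ∈ Icc a b := Ioo_subset_Icc_self hx₀
  obtain ⟨u, hx₀u, hu⟩ : ∃ u, x₀ < u ∧ ∀ x ∈ Ioo x₀ u, p₁ x < p₂ x₀ := by
    have hev : ∀ᶠ x in 𝓝 x₀, p₁ x < p₂ x₀ :=
      (h₁.continuousAt (Icc_mem_nhds hx₀.1 hx₀.2)).eventually_lt_const hlt
    obtain ⟨l, u, ⟨hl, hu⟩, hsub⟩ := mem_nhds_iff_exists_Ioo_subset.1 hev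
    exact ⟨u, hu, fun x hx ↦ hsub ⟨hl.trans hx.1, hx.2⟩⟩
  have hsub₁ : Iio u ≤ᵐ[μ] p₁ ⁻¹' Iio (p₂ x₀) := by
    filter_upwards [hμ] with x hx hxu
    rcases le_or_gt x x₀ with h | h
    · exact (hm₁.monotoneOn hx hx₀' h).trans_lt hlt
    · exact hu x ⟨h, hxu⟩
  have hsub₂ : p₂ ⁻¹' Iio (p₂ x₀) ≤ᵐ[μ] Iio x₀ := by
    filter_upwards [hμ] with x hx hpx
    exact (hm₂.lt_iff_lt hx hx₀').1 hpx
  have hle : μ (Iio u) ≤ μ (Iio x₀) := calc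
    μ (Iio u) ≤ μ (p₁ ⁻¹' Iio (p₂ x₀)) := measure_mono_ae hsub₁
    _ = μ (p₂ ⁻¹' Iio (p₂ x₀)) := by
      rw [← Measure.map_apply_of_aemeasurable hX₁ measurableSet_Iio, hmap,
        Measure.map_apply_of_aemeasurable hX₂ measurableSet_Iio]
    _ ≤ μ (Iio x₀) := measure_mono_ae hsub₂
  have hgap : Ioo x₀ (min u b) ⊆ Iio u \ Iio x₀ :=
    fun x hx ↦ ⟨hx.2.trans_le (min_le_left _ _), not_lt.2 hx.1.le⟩
  refine hpos x₀ (min u b) hx₀.1.le (lt_min hx₀u hx₀.2) (min_le_right _ _)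
    (measure_mono_null hgap ?_)
  rw [measure_sdiff (Iio_subset_Iio hx₀u.le) measurableSet_Iio.nullMeasurableSet
    (measure_ne_top _ _), tsub_eq_zero_of_le hle]

theorem StrictMonoOn.eqOn_of_map_eq (hm₁ : StrictMonoOn p₁ (Icc a b))
    (hm₂ : StrictMonoOn p₂ (Icc a b)) (hab : a < b) (hμ : ∀ᵐ x ∂μ, x ∈ Icc a b)
    (hpos : ∀ u v, a ≤ u → u < v → v ≤ b → μ (Ioo u v) ≠ 0)
    (h₁ : ContinuousOn p₁ (Icc a b)) (h₂ : ContinuousOn p₂ (Icc a b))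
    (hX₁ : AEMeasurable p₁ μ) (hX₂ : AEMeasurable p₂ μ) (hmap : μ.map p₁ = μ.map p₂) :
    EqOn p₁ p₂ (Icc a b) := by
  refine EqOn.of_subset_closure (s := Ioo a b) (fun x hx ↦ ?_) h₁ h₂ Ioo_subset_Icc_self
    (closure_Ioo hab.ne).ge
  by_contra hne
  rcases lt_or_gt_of_ne hne with h | h
  · exact map_ne_map_of_strictMonoOn_of_lt hμ hpos h₁ hm₁ hm₂ hX₁ hX₂ hx h hmap
  · exact map_ne_map_of_strictMonoOn_of_lt hμ hpos h₂ hm₂ hm₁ hX₂ hX₁ hx h hmap.symm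

theorem StrictAntiOn.eqOn_of_map_eq (hm₁ : StrictAntiOn p₁ (Icc a b))
    (hm₂ : StrictAntiOn p₂ (Icc a b)) (hab : a < b) (hμ : ∀ᵐ x ∂μ, x ∈ Icc a b)
    (hpos : ∀ u v, a ≤ u → u < v → v ≤ b → μ (Ioo u v) ≠ 0)
    (h₁ : ContinuousOn p₁ (Icc a b)) (h₂ : ContinuousOn p₂ (Icc a b))
    (hX₁ : AEMeasurable p₁ μ) (hX₂ : AEMeasurable p₂ μ) (hmap : μ.map p₁ = μ.map p₂) :
    EqOn p₁ p₂ (Icc a b) := by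
  have hmap' : μ.map (fun x ↦ -p₁ x) = μ.map (fun x ↦ -p₂ x) := by
    change μ.map (Neg.neg ∘ p₁) = μ.map (Neg.neg ∘ p₂)
    rw [← measurable_neg.aemeasurable.map_map_of_aemeasurable hX₁,
      ← measurable_neg.aemeasurable.map_map_of_aemeasurable hX₂, hmap]
  intro x hx
  simpa using hm₁.neg.eqOn_of_map_eq hm₂.neg hab hμ hpos h₁.neg h₂.neg hX₁.neg hX₂.neg hmap' hx

theorem eqOn_of_map_eq_of_mul_deriv_pos {p₁' p₂' : ℝ → ℝ} (hab : a < b)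
    (hμ : ∀ᵐ x ∂μ, x ∈ Icc a b) (hpos : ∀ u v, a ≤ u → u < v → v ≤ b → μ (Ioo u v) ≠ 0)
    (hp₁ : ∀ x ∈ Icc a b, HasDerivWithinAt p₁ (p₁' x) (Icc a b) x)
    (hp₂ : ∀ x ∈ Icc a b, HasDerivWithinAt p₂ (p₂' x) (Icc a b) x)
    (hsign : ∀ x ∈ Icc a b, 0 < p₁' x * p₂' x)
    (hmono₁ : StrictMonoOn p₁ (Icc a b) ∨ StrictAntiOn p₁ (Icc a b))
    (hmono₂ : StrictMonoOn p₂ (Icc a b) ∨ StrictAntiOn p₂ (Icc a b))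
    (hX₁ : AEMeasurable p₁ μ) (hX₂ : AEMeasurable p₂ μ) (hmap : μ.map p₁ = μ.map p₂) :
    EqOn p₁ p₂ (Icc a b) := by
  have hc₁ : ContinuousOn p₁ (Icc a b) := fun x hx ↦ (hp₁ x hx).continuousWithinAt
  have hc₂ : ContinuousOn p₂ (Icc a b) := fun x hx ↦ (hp₂ x hx).continuousWithinAt
  have ha : a ∈ Icc a b := left_mem_Icc.2 hab.le
  have hua : UniqueDiffWithinAt ℝ (Icc a b) a := uniqueDiffOn_Icc hab a ha
  rcases hmono₁ with hm₁ | hm₁ <;> rcases hmono₂ with hm₂ | hm₂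
  · exact hm₁.eqOn_of_map_eq hm₂ hab hμ hpos hc₁ hc₂ hX₁ hX₂ hmap
  · exact absurd (hsign a ha) <| not_lt.2 <|
      (hp₁ a ha).mul_nonpos_of_monotoneOn_of_antitoneOn hua (hp₂ a ha) hm₁.monotoneOn hm₂.antitoneOn
  · exact absurd (hsign a ha) <| not_lt.2 <| (mul_comm _ _).trans_le <|
      (hp₂ a ha).mul_nonpos_of_monotoneOn_of_antitoneOn hua (hp₁ a ha) hm₂.monotoneOn hm₁.antitoneOn
  · exact hm₁.eqOn_of_map_eq hm₂ hab hμ hpos hc₁ hc₂ hX₁ hX₂ hmap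

end PushforwardDeterminesMonotone

theorem eqOn_of_eq_mul_exp_neg_integral {ρ₁ ρ₂ L₁ L₂ : ℝ → ℝ} {d T : ℝ}
    (h₁ : ∀ t ∈ Icc 0 T, ρ₁ t = L₁ t * Real.exp (-(d * ∫ s in (0:ℝ)..t, ρ₁ s)))
    (h₂ : ∀ t ∈ Icc 0 T, ρ₂ t = L₂ t * Real.exp (-(d * ∫ s in (0:ℝ)..t, ρ₂ s)))
    (heq : EqOn ρ₁ ρ₂ (Icc 0 T)) : EqOn L₁ L₂ (Icc 0 T) := by
  intro t ht
  have hI : ∫ s in (0:ℝ)..t, ρ₁ s = ∫ s in (0:ℝ)..t, ρ₂ s :=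
    intervalIntegral.integral_congr fun s hs ↦ heq <| by
      rw [uIcc_of_le ht.1] at hs
      exact ⟨hs.1, hs.2.trans ht.2⟩
  have h := (h₁ t ht).symm.trans ((heq ht).trans (h₂ t ht))
  rw [hI] at h
  exact mul_right_cancel₀ (Real.exp_ne_zero _) h

theorem stmt_6_general (T a b : ℝ) (hT : 0 < T) (hab : a < b) (n₀ : ℝ → ℝ)
    (hn₀c : Continuous n₀) (hn₀nn : ∀ x, 0 ≤ n₀ x)
    (hn₀pos : ∀ x ∈ Ioo a b, 0 < n₀ x)
    (d : ℝ)
    (p₁ p₂ p₁' p₂' : ℝ → ℝ)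
    (hp₁ : ∀ x ∈ Icc a b, HasDerivWithinAt p₁ (p₁' x) (Icc a b) x)
    (hp₂ : ∀ x ∈ Icc a b, HasDerivWithinAt p₂ (p₂' x) (Icc a b) x)
    (hsign : ∀ x ∈ Icc a b, 0 < p₁' x * p₂' x)
    (hmono₁ : StrictMonoOn p₁ (Icc a b) ∨ StrictAntiOn p₁ (Icc a b))
    (hmono₂ : StrictMonoOn p₂ (Icc a b) ∨ StrictAntiOn p₂ (Icc a b))
    (ρ₁ ρ₂ : ℝ → ℝ)
    (hfix₁ : ∀ t ∈ Icc (0:ℝ) T, ρ₁ t =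
      ∫ x in Icc a b, n₀ x * Real.exp (t * p₁ x) * Real.exp (-(d * ∫ s in (0:ℝ)..t, ρ₁ s)))
    (hfix₂ : ∀ t ∈ Icc (0:ℝ) T, ρ₂ t =
      ∫ x in Icc a b, n₀ x * Real.exp (t * p₂ x) * Real.exp (-(d * ∫ s in (0:ℝ)..t, ρ₂ s)))
    (heq : ∀ t ∈ Icc (0:ℝ) T, ρ₁ t = ρ₂ t) :
    Set.EqOn p₁ p₂ (Icc a b) := by
  have hc₁ : ContinuousOn p₁ (Icc a b) := fun x hx ↦ (hp₁ x hx).continuousWithinAt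
  have hc₂ : ContinuousOn p₂ (Icc a b) := fun x hx ↦ (hp₂ x hx).continuousWithinAt
  set μ := (volume.restrict (Icc a b)).withDensity fun x ↦ ENNReal.ofReal (n₀ x)
  have : IsFiniteMeasure μ :=
    isFiniteMeasure_withDensity_ofReal hn₀c.integrableOn_Icc.hasFiniteIntegral
  have hμ : ∀ᵐ x ∂μ, x ∈ Icc a b := ae_mem_withDensity_restrict measurableSet_Icc _
  have hX₁ := hc₁.aemeasurable_of_ae_mem measurableSet_Icc hμ
  have hX₂ := hc₂.aemeasurable_of_ae_mem measurableSet_Icc hμ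
  have hexp {p : ℝ → ℝ} (hp : ContinuousOn p (Icc a b)) (t : ℝ) :
      Integrable (fun x ↦ Real.exp (t * p x)) μ :=
    (Real.continuous_exp.comp_continuousOn (continuousOn_const.mul hp)).integrable_of_ae_mem
      isCompact_Icc hμ
  have hmgf (p : ℝ → ℝ) : mgf p μ = fun t ↦ ∫ x in Icc a b, n₀ x * Real.exp (t * p x) :=
    funext fun t ↦ integral_withDensity_restrict_ofReal measurableSet_Icc hn₀c.measurable
      (fun x _ ↦ hn₀nn x) _
  have hmap : μ.map p₁ = μ.map p₂ := by
    refine Measure.map_eq_of_mgf_eventuallyEq hX₁ hX₂ (hexp hc₁) (hexp hc₂) (t₀ := T / 2) ?_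
    rw [hmgf, hmgf]
    filter_upwards [Icc_mem_nhds (half_pos hT) (half_lt_self hT)] with t ht
    exact eqOn_of_eq_mul_exp_neg_integral (fun t ht ↦ by rw [hfix₁ t ht, integral_mul_const])
      (fun t ht ↦ by rw [hfix₂ t ht, integral_mul_const]) heq ht
  have hpos (u v : ℝ) (hu : a ≤ u) (huv : u < v) (hv : v ≤ b) : μ (Ioo u v) ≠ 0 :=
    withDensity_restrict_ofReal_ne_zero hn₀c.measurable measurableSet_Ioo
      (Ioo_subset_Icc_self.trans (Icc_subset_Icc hu hv))
      (fun x hx ↦ hn₀pos x ⟨hu.trans_lt hx.1, hx.2.trans_le hv⟩) (by simpa using huv)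
  exact eqOn_of_map_eq_of_mul_deriv_pos hab hμ hpos hp₁ hp₂ hsign hmono₁ hmono₂ hX₁ hX₂ hmap

/-- Uniqueness of the growth rate `p` from the total population size, for constant death rate
`d > 0` and strictly monotone `p₁, p₂` with `p₁' p₂' > 0` on `S = Icc a b = supp n₀`. -/
theorem stmt_6 (T a b : ℝ) (hT : 0 < T) (hab : a < b) (n₀ : ℝ → ℝ)
    (hn₀c : Continuous n₀) (hn₀nn : ∀ x, 0 ≤ n₀ x)
    (hsupp : tsupport n₀ = Icc a b) (hn₀pos : ∀ x ∈ Ioo a b, 0 < n₀ x)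
    (d : ℝ) (hd : 0 < d)
    (p₁ p₂ p₁' p₂' : ℝ → ℝ)
    (hp₁ : ∀ x ∈ Icc a b, HasDerivWithinAt p₁ (p₁' x) (Icc a b) x)
    (hp₂ : ∀ x ∈ Icc a b, HasDerivWithinAt p₂ (p₂' x) (Icc a b) x)
    (hp₁'c : ContinuousOn p₁' (Icc a b)) (hp₂'c : ContinuousOn p₂' (Icc a b))
    (hsign : ∀ x ∈ Icc a b, 0 < p₁' x * p₂' x)
    (hmono₁ : StrictMonoOn p₁ (Icc a b) ∨ StrictAntiOn p₁ (Icc a b))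
    (hmono₂ : StrictMonoOn p₂ (Icc a b) ∨ StrictAntiOn p₂ (Icc a b))
    (ρ₁ ρ₂ : ℝ → ℝ) (hρ₁c : Continuous ρ₁) (hρ₂c : Continuous ρ₂)
    (hfix₁ : ∀ t ∈ Icc (0:ℝ) T, ρ₁ t =
      ∫ x in Icc a b, n₀ x * Real.exp (t * p₁ x) * Real.exp (-(d * ∫ s in (0:ℝ)..t, ρ₁ s)))
    (hfix₂ : ∀ t ∈ Icc (0:ℝ) T, ρ₂ t =
      ∫ x in Icc a b, n₀ x * Real.exp (t * p₂ x) * Real.exp (-(d * ∫ s in (0:ℝ)..t, ρ₂ s)))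
    (heq : ∀ t ∈ Icc (0:ℝ) T, ρ₁ t = ρ₂ t) :
    Set.EqOn p₁ p₂ (Icc a b) :=
  stmt_6_general T a b hT hab n₀ hn₀c hn₀nn hn₀pos d p₁ p₂ p₁' p₂' hp₁ hp₂ hsign hmono₁ hmono₂ ρ₁ ρ₂
    hfix₁ hfix₂ heq
end

section
/- Let n₀, d be differentiable with n₀(x̄) > 0, let p be constant, and let n(t,x) = n₀(x) e^{t p − d(x) ∫₀ᵗ ρ(s) ds} with ρ continuous and positive. If t > 0 and ∂_x n(t, x̄) = 0, then d′(x̄) = n₀′(x̄) / (n₀(x̄) ∫₀ᵗ ρ(s) ds). -/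
open MeasureTheory Set

/-- Reconstruction formula for `d'` at a critical point, for constant `p` and positive `ρ`. -/
theorem stmt_11 (x₀ t : ℝ) (ht : 0 < t) (n₀ d ρ : ℝ → ℝ) (p : ℝ)
    (hn₀ : DifferentiableAt ℝ n₀ x₀) (hd : DifferentiableAt ℝ d x₀) (hpos : 0 < n₀ x₀)
    (hρ : Continuous ρ) (hρpos : ∀ s, 0 < ρ s)
    (hcrit : deriv (fun y => n₀ y * Real.exp (t * p - d y * ∫ s in (0:ℝ)..t, ρ s)) x₀ = 0) :
    deriv d x₀ = deriv n₀ x₀ / (n₀ x₀ * ∫ s in (0:ℝ)..t, ρ s) := by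
  set I : ℝ := ∫ s in (0:ℝ)..t, ρ s with hI
  have hIpos : 0 < I := by
    apply intervalIntegral.intervalIntegral_pos_of_pos
    · exact (hρ.intervalIntegrable 0 t)
    · exact hρpos
    · exact ht
  have hinner : HasDerivAt (fun y => t * p - d y * I) (-(deriv d x₀ * I)) x₀ := by
    simpa using ((hd.hasDerivAt.mul_const I)).const_sub (t * p)
  have hexp : HasDerivAt (fun y => Real.exp (t * p - d y * I))
      (Real.exp (t * p - d x₀ * I) * (-(deriv d x₀ * I))) x₀ :=
    (Real.hasDerivAt_exp _).comp x₀ hinner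
  have hmul : HasDerivAt (fun y => n₀ y * Real.exp (t * p - d y * I))
      (deriv n₀ x₀ * Real.exp (t * p - d x₀ * I) +
        n₀ x₀ * (Real.exp (t * p - d x₀ * I) * (-(deriv d x₀ * I)))) x₀ :=
    hn₀.hasDerivAt.mul hexp
  have h0 := hmul.deriv
  rw [hcrit] at h0
  have hE : (0:ℝ) < Real.exp (t * p - d x₀ * I) := Real.exp_pos _
  have key : deriv n₀ x₀ = n₀ x₀ * (deriv d x₀ * I) := by
    have := h0.symm
    nlinarith [hE]
  rw [key]
  field_simp
end

section
/- Let n₀ be differentiable with n₀(x̄) > 0, p and d differentiable, ρ continuous, and n(t,x) = n₀(x) e^{t p(x) − d(x) ∫₀ᵗ ρ(s) ds}. Suppose x̄ is a critical point of n(t₁,·) and n(t₂,·) with 0 ≤ t₁ < t₂, and suppose the determinant t₁ ∫₀^{t₂} ρ − t₂ ∫₀^{t₁} ρ is nonzero. Then d′(x̄) and p′(x̄) are uniquely determined by n₀′(x̄)/n₀(x̄), t₁, t₂, and ∫₀^{t₁} ρ, ∫₀^{t₂} ρ, as the unique solution of the 2×2 linear system (∫₀^{t_i} ρ) d′(x̄)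 − t_i p′(x̄) = n₀′(x̄)/n₀(x̄), i = 1,2. -/
open MeasureTheory Set

/-- A critical point recorded at two times with nonsingular coefficient matrix determines
`d'(x₀)` and `p'(x₀)` as the unique solution of the 2×2 linear system. -/
theorem stmt_15 (x₀ t₁ t₂ : ℝ) (n₀ p d ρ : ℝ → ℝ)
    (hn₀ : DifferentiableAt ℝ n₀ x₀) (hp : DifferentiableAt ℝ p x₀)
    (hd : DifferentiableAt ℝ d x₀) (hpos : 0 < n₀ x₀) (hρ : Continuous ρ)
    (ht₁ : 0 ≤ t₁) (ht₁₂ : t₁ < t₂)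
    (hdet : t₁ * (∫ s in (0:ℝ)..t₂, ρ s) - t₂ * (∫ s in (0:ℝ)..t₁, ρ s) ≠ 0)
    (hc₁ : deriv (fun y => n₀ y * Real.exp (t₁ * p y - d y * ∫ s in (0:ℝ)..t₁, ρ s)) x₀ = 0)
    (hc₂ : deriv (fun y => n₀ y * Real.exp (t₂ * p y - d y * ∫ s in (0:ℝ)..t₂, ρ s)) x₀ = 0) :
    ((∫ s in (0:ℝ)..t₁, ρ s) * deriv d x₀ - t₁ * deriv p x₀ = deriv n₀ x₀ / n₀ x₀) ∧
    ((∫ s in (0:ℝ)..t₂, ρ s) * deriv d x₀ - t₂ * deriv p x₀ = deriv n₀ x₀ / n₀ x₀) ∧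
    (∀ D P : ℝ,
      (∫ s in (0:ℝ)..t₁, ρ s) * D - t₁ * P = deriv n₀ x₀ / n₀ x₀ →
      (∫ s in (0:ℝ)..t₂, ρ s) * D - t₂ * P = deriv n₀ x₀ / n₀ x₀ →
      D = deriv d x₀ ∧ P = deriv p x₀) := by
  have key : ∀ t : ℝ,
      deriv (fun y => n₀ y * Real.exp (t * p y - d y * ∫ s in (0:ℝ)..t, ρ s)) x₀ = 0 →
      (∫ s in (0:ℝ)..t, ρ s) * deriv d x₀ - t * deriv p x₀ = deriv n₀ x₀ / n₀ x₀ := by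
    intro t hc
    set I := ∫ s in (0:ℝ)..t, ρ s with hI
    have hg : HasDerivAt (fun y => t * p y - d y * I)
        (t * deriv p x₀ - deriv d x₀ * I) x₀ :=
      (hp.hasDerivAt.const_mul t).sub (hd.hasDerivAt.mul_const I)
    have h1 : HasDerivAt (fun y => n₀ y * Real.exp (t * p y - d y * I))
        (deriv n₀ x₀ * Real.exp (t * p x₀ - d x₀ * I) +
          n₀ x₀ * (Real.exp (t * p x₀ - d x₀ * I) * (t * deriv p x₀ - deriv d x₀ * I))) x₀ :=
      hn₀.hasDerivAt.mul hg.exp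
    have h2 : deriv n₀ x₀ * Real.exp (t * p x₀ - d x₀ * I) +
        n₀ x₀ * (Real.exp (t * p x₀ - d x₀ * I) * (t * deriv p x₀ - deriv d x₀ * I)) = 0 := by
      rw [← h1.deriv]; exact hc
    have hexp : Real.exp (t * p x₀ - d x₀ * I) ≠ 0 := (Real.exp_pos _).ne'
    have h3 : deriv n₀ x₀ + n₀ x₀ * (t * deriv p x₀ - deriv d x₀ * I) = 0 := by
      have h4 : (deriv n₀ x₀ + n₀ x₀ * (t * deriv p x₀ - deriv d x₀ * I)) *
          Real.exp (t * p x₀ - d x₀ * I) = 0 := by linear_combination h2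
      exact (mul_eq_zero.1 h4).resolve_right hexp
    field_simp
    nlinarith [h3]
  have e1 := key t₁ hc₁
  have e2 := key t₂ hc₂
  refine ⟨e1, e2, fun D P h1 h2 => ?_⟩
  set I₁ := ∫ s in (0:ℝ)..t₁, ρ s
  set I₂ := ∫ s in (0:ℝ)..t₂, ρ s
  have ha : I₁ * (D - deriv d x₀) - t₁ * (P - deriv p x₀) = 0 := by linear_combination h1 - e1
  have hb : I₂ * (D - deriv d x₀) - t₂ * (P - deriv p x₀) = 0 := by linear_combination h2 - e2
  have haz : D - deriv d x₀ = 0 := by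
    rcases mul_eq_zero.1 (show (t₁ * I₂ - t₂ * I₁) * (D - deriv d x₀) = 0 by linear_combination t₁ * hb - t₂ * ha) with h | h
    · exact absurd h hdet
    · exact h
  have ht₂ : (0:ℝ) < t₂ := lt_of_le_of_lt ht₁ ht₁₂
  have hbz : P - deriv p x₀ = 0 := by
    have : t₂ * (P - deriv p x₀) = 0 := by linear_combination I₂ * haz - hb
    exact (mul_eq_zero.1 this).resolve_left ht₂.ne'
  constructor <;> linarith
end
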